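/- For the (2,2,2) Bell-type cover M = {{a1,b1},{a1,b2},{a2,b1},{a2,b2}} with O = {0,1}, every compatible family (e_C)_{C∈M} of real-valued signed distributions admits a global signed distribution d on O^X with d|_C = e_C for all C ∈ M. -/

import Mathlib

open Finset

/-- The four measurements of the (2,2,2) Bell-type scenario. -/
inductive Meas : Type
  | a1 | a2 | b1 | b2
  deriving DecidableEq

instance : Fintype Meas :=
  ⟨{Meas.a1, Meas.a2, Meas.b1, Meas.b2}, fun x => by cases x <;> simp⟩

open Meas

/-- Tuple-to-function encoding for the (2,2,2) scenario. -/
def f : Fin 2 × Fin 2 × Fin 2 × Fin 2 → (Meas → Fin 2) :=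
  fun t m => match m with
  | a1 => t.1
  | a2 => t.2.1
  | b1 => t.2.2.1
  | b2 => t.2.2.2

lemma f_bij : Function.Bijective f := by decide

set_option maxHeartbeats 1000000
/-- Over the reals (signed distributions), every no-signaling empirical model on the
(2,2,2) Bell-type cover admits a global signed distribution marginalizing to each
context distribution. -/
theorem signed_global_distribution_exists_222
    (eA1B1 eA1B2 eA2B1 eA2B2 : Fin 2 → Fin 2 → ℝ)
    (h11 : ∑ o1 : Fin 2, ∑ o2 : Fin 2, eA1B1 o1 o2 = 1)
    (h12 : ∑ o1 : Fin 2, ∑ o2 : Fin 2, eA1B2 o1 o2 = 1)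
    (h21 : ∑ o1 : Fin 2, ∑ o2 : Fin 2, eA2B1 o1 o2 = 1)
    (h22 : ∑ o1 : Fin 2, ∑ o2 : Fin 2, eA2B2 o1 o2 = 1)
    (ha1 : ∀ o : Fin 2, ∑ o2 : Fin 2, eA1B1 o o2 = ∑ o2 : Fin 2, eA1B2 o o2)
    (ha2 : ∀ o : Fin 2, ∑ o2 : Fin 2, eA2B1 o o2 = ∑ o2 : Fin 2, eA2B2 o o2)
    (hb1 : ∀ o : Fin 2, ∑ o1 : Fin 2, eA1B1 o1 o = ∑ o1 : Fin 2, eA2B1 o1 o)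
    (hb2 : ∀ o : Fin 2, ∑ o1 : Fin 2, eA1B2 o1 o = ∑ o1 : Fin 2, eA2B2 o1 o) :
    ∃ d : (Meas → Fin 2) → ℝ,
      (∑ g : Meas → Fin 2, d g = 1) ∧
      (∀ o1 o2 : Fin 2,
        (∑ g ∈ univ.filter (fun g : Meas → Fin 2 => g a1 = o1 ∧ g b1 = o2), d g) =
          eA1B1 o1 o2) ∧
      (∀ o1 o2 : Fin 2,
        (∑ g ∈ univ.filter (fun g : Meas → Fin 2 => g a1 = o1 ∧ g b2 = o2), d g) =
          eA1B2 o1 o2) ∧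
      (∀ o1 o2 : Fin 2,
        (∑ g ∈ univ.filter (fun g : Meas → Fin 2 => g a2 = o1 ∧ g b1 = o2), d g) =
          eA2B1 o1 o2) ∧
      (∀ o1 o2 : Fin 2,
        (∑ g ∈ univ.filter (fun g : Meas → Fin 2 => g a2 = o1 ∧ g b2 = o2), d g) =
          eA2B2 o1 o2) := by
  classical
  simp only [Fin.sum_univ_two] at h11 h12 h21 h22
  have ha10 := ha1 0; have ha11 := ha1 1; have ha20 := ha2 0; have ha21 := ha2 1
  have hb10 := hb1 0; have hb11 := hb1 1; have hb20 := hb2 0; have hb21 := hb2 1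
  simp only [Fin.sum_univ_two] at ha10 ha11 ha20 ha21 hb10 hb11 hb20 hb21
  set A1 : Fin 2 → ℝ := fun x => ∑ y : Fin 2, eA1B1 x y with hA1
  set A2 : Fin 2 → ℝ := fun x => ∑ y : Fin 2, eA2B1 x y with hA2
  set B1 : Fin 2 → ℝ := fun y => ∑ x : Fin 2, eA1B1 x y with hB1
  set B2 : Fin 2 → ℝ := fun y => ∑ x : Fin 2, eA1B2 x y with hB2
  refine ⟨fun g =>
      (eA1B1 (g a1) (g b1) + eA1B2 (g a1) (g b2) + eA2B1 (g a2) (g b1)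
        + eA2B2 (g a2) (g b2)) / 4
      - (A1 (g a1) + A2 (g a2) + B1 (g b1) + B2 (g b2)) / 8 + 1 / 16, ?_, ?_, ?_, ?_, ?_⟩
  case _ =>
    rw [← Fintype.sum_bijective f f_bij _ _ (fun t => rfl)]
    simp only [Fintype.sum_prod_type, Fin.sum_univ_two, f, A1, A2, B1, B2]
    linarith
  all_goals
    intro o1 o2
    rw [Finset.sum_filter, ← Fintype.sum_bijective f f_bij _ _ (fun t => rfl)]
    fin_cases o1 <;> fin_cases o2 <;>
      · simp only [Fintype.sum_prod_type, Fin.sum_univ_two, f, A1, A2, B1, B2]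
        norm_num
        linarith
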